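/- arXiv:1312.6510 — 7 statements merged into one kernel-verified Lean document; each statement's English description precedes it below -/
import Mathlib

section
/- For all real z⁻, z⁺ with 0 ≤ z⁻ ≤ z⁺ ≤ π, it holds that cos((z⁺ − z⁻)/2) ≥ 1 − (cos z⁻ − cos z⁺)/2. -/
/-! Writing `a = z⁺/2`, `b = z⁻/2`, the half-angle formulas turn the defect
`cos (a - b) - 1 + (cos z⁻ - cos z⁺)/2` into `cos a (cos b - cos a) + sin b (sin a - sin b)`.
For `0 ≤ b ≤ a ≤ π/2` both products are nonnegative, since `cos` decreases and `sin` increases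
on `[0, π/2]`, where both are nonnegative. -/

open Real

theorem cos_half_sub_sub_one_add_half_cos_sub_cos (x y : ℝ) :
    cos ((y - x) / 2) - 1 + (cos x - cos y) / 2 =
      cos (y / 2) * (cos (x / 2) - cos (y / 2)) + sin (x / 2) * (sin (y / 2) - sin (x / 2)) := by
  have hx : cos x = 2 * cos (x / 2) ^ 2 - 1 := by rw [← cos_two_mul]; ring_nf
  have hy : cos y = 2 * cos (y / 2) ^ 2 - 1 := by rw [← cos_two_mul]; ring_nf
  rw [show (y - x) / 2 = y / 2 - x / 2 by ring, cos_sub, hx, hy]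
  linear_combination sin_sq_add_cos_sq (x / 2)

theorem stmt_3 (zm zp : ℝ) (h0 : 0 ≤ zm) (h1 : zm ≤ zp) (h2 : zp ≤ Real.pi) :
    1 - (Real.cos zm - Real.cos zp) / 2 ≤ Real.cos ((zp - zm) / 2) := by
  have cos_nonneg : 0 ≤ cos (zp / 2) := cos_nonneg_of_mem_Icc ⟨by linarith [pi_pos], by linarith⟩
  have sin_nonneg : 0 ≤ sin (zm / 2) := sin_nonneg_of_nonneg_of_le_pi (by linarith) (by linarith)
  have cos_anti : cos (zp / 2) ≤ cos (zm / 2) :=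
    cos_le_cos_of_nonneg_of_le_pi (by linarith) (by linarith) (by linarith)
  have sin_mono : sin (zm / 2) ≤ sin (zp / 2) :=
    sin_le_sin_of_le_of_le_pi_div_two (by linarith) (by linarith) (by linarith)
  have := cos_half_sub_sub_one_add_half_cos_sub_cos zm zp
  linarith [mul_nonneg cos_nonneg (sub_nonneg.2 cos_anti),
    mul_nonneg sin_nonneg (sub_nonneg.2 sin_mono)]
end

section
/- Let 0 ≤ z⁻ ≤ z⁺ ≤ π and let z* ∈ [0, π/2] satisfy cos z* = 1 − (cos z⁻ − cos z⁺)/2. Then z⁺ − z⁻ ≤ 2·z*. -/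
namespace Real

theorem sin_le_sin_of_le_of_le_pi_sub {x y : ℝ} (hx : 0 ≤ x) (hxy : x ≤ y) (hy : y ≤ π - x) :
    sin x ≤ sin y := by
  rcases le_or_gt y (π / 2) with hy' | hy'
  · exact sin_le_sin_of_le_of_le_pi_div_two (by linarith) hy' hxy
  · rw [← sin_pi_sub y]
    exact sin_le_sin_of_le_of_le_pi_div_two (by linarith) (by linarith) (by linarith)

/-- With `d = (y - x) / 2` and `a = (y + x) / 2` we have `cos x - cos y = 2 sin a sin d` and
`d ≤ a ≤ π - d`, so `sin a ≥ sin d` and the left side is at most `1 - sin² d = cos² d ≤ cos d`. -/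
theorem one_sub_half_cos_sub_cos_le_cos_half_sub {x y : ℝ} (hx : 0 ≤ x) (hxy : x ≤ y)
    (hy : y ≤ π) : 1 - (cos x - cos y) / 2 ≤ cos ((y - x) / 2) := by
  set d := (y - x) / 2 with hd
  set a := (y + x) / 2 with ha
  have hd_nonneg : 0 ≤ d := by linarith
  have hsub : cos x - cos y = 2 * sin a * sin d := by
    rw [cos_sub_cos, show (x - y) / 2 = -d by ring, show (x + y) / 2 = a by ring, sin_neg]
    ring
  have hsin : sin d ≤ sin a := sin_le_sin_of_le_of_le_pi_sub hd_nonneg (by linarith) (by linarith)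
  have hsin_nonneg : 0 ≤ sin d := sin_nonneg_of_nonneg_of_le_pi hd_nonneg (by linarith)
  have hcos_nonneg : 0 ≤ cos d := cos_nonneg_of_mem_Icc ⟨by linarith, by linarith⟩
  calc 1 - (cos x - cos y) / 2 = 1 - sin a * sin d := by rw [hsub]; ring
    _ ≤ 1 - sin d ^ 2 := by nlinarith
    _ = cos d ^ 2 := by rw [← sin_sq_add_cos_sq d]; ring
    _ ≤ cos d := by nlinarith [cos_le_one d]

end Real

theorem stmt_4 (zm zp zs : ℝ) (h0 : 0 ≤ zm) (h1 : zm ≤ zp) (h2 : zp ≤ Real.pi)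
    (hzs : zs ∈ Set.Icc 0 (Real.pi / 2))
    (hcos : Real.cos zs = 1 - (Real.cos zm - Real.cos zp) / 2) :
    zp - zm ≤ 2 * zs := by
  obtain ⟨hzs0, hzs_le⟩ := hzs
  have hcos_le : Real.cos zs ≤ Real.cos ((zp - zm) / 2) :=
    hcos ▸ Real.one_sub_half_cos_sub_cos_le_cos_half_sub h0 h1 h2
  have hhalf_le : (zp - zm) / 2 ≤ zs :=
    (Real.strictAntiOn_cos.le_iff_ge ⟨hzs0, by linarith [Real.pi_pos]⟩
      ⟨by linarith, by linarith⟩).1 hcos_le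
  linarith
end

section
/- Let φ(z) = −cos z on [0, π]. For any measurable set S ⊆ [−1, 1], the Lebesgue measure of its preimage satisfies |φ⁻¹(S)| ≤ |φ⁻¹(S*)|, where S* = [−1, −λ*] ∪ [λ*, 1] with λ* = 1 − |S|/2. -/
/-! Pushing Lebesgue measure forward along `φ = -cos`, which is injective on `[0, π]` with
derivative `sin`, gives `|S| = ∫_{φ⁻¹ S} sin`. For `l = λ*` and `s = √(1 - l²)`, the preimage
`B = φ⁻¹ S*` is exactly `{z ∈ [0, π] | sin z ≤ s}`, and `|S*| = |S|`. So `A = φ⁻¹ S` and `B`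
carry the same `sin`-mass, while `sin > s` on `A \ B` and `sin ≤ s` on `B \ A`; comparing
`∫_{A \ B} sin ≤ ∫_{B \ A} sin` with the threshold `s` gives `|A \ B| ≤ |B \ A|`. -/

open Real MeasureTheory Set

open scoped ENNReal

section Bathtub

variable {α : Type*} [MeasurableSpace α] {μ : Measure α} {w : α → ℝ≥0∞} {t : ℝ≥0∞}

theorem measure_le_of_setLIntegral_le_of_lt_of_le (hw : Measurable w) {X Y : Set α}
    (hXY : ∫⁻ x in X, w x ∂μ ≤ ∫⁻ y in Y, w y ∂μ) (ht : t ≠ ∞)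
    (hX : ∀ x ∈ X, t < w x) (hY : ∀ y ∈ Y, w y ≤ t) : μ X ≤ μ Y := by
  have hYt : ∫⁻ y in Y, w y ∂μ ≤ t * μ Y :=
    (setLIntegral_mono measurable_const hY).trans_eq (setLIntegral_const Y t)
  rcases eq_zero_or_pos t with rfl | htpos
  · have hX0 : ∫⁻ x in X, w x ∂μ = 0 := nonpos_iff_eq_zero.1 (by simpa using hXY.trans hYt)
    have hsupp : Function.support w ∩ X = X := inter_eq_right.2 fun x hx => (hX x hx).ne'
    have hμX : μ X = 0 := by simpa [hX0, hsupp] using setLIntegral_pos_iff (μ := μ) hw (s := X)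
    simp [hμX]
  · have hXt : t * μ X ≤ ∫⁻ x in X, w x ∂μ :=
      (setLIntegral_const X t).symm.trans_le (setLIntegral_mono hw fun x hx => (hX x hx).le)
    exact (ENNReal.mul_le_mul_iff_right htpos.ne' ht).1 (hXt.trans (hXY.trans hYt))

theorem measure_le_of_setLIntegral_le (hw : Measurable w) {A B : Set α}
    (hA : MeasurableSet A) (hB : MeasurableSet B)
    (hAB : ∫⁻ x in A, w x ∂μ ≤ ∫⁻ x in B, w x ∂μ) (hfin : ∫⁻ x in A ∩ B, w x ∂μ ≠ ∞)
    (ht : t ≠ ∞) (hA_lt : ∀ x ∈ A \ B, t < w x) (hB_le : ∀ x ∈ B \ A, w x ≤ t) :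
    μ A ≤ μ B := by
  rw [← lintegral_inter_add_sdiff w A hB, ← lintegral_inter_add_sdiff w B hA,
    inter_comm B A, ENNReal.add_le_add_iff_left hfin] at hAB
  rw [← measure_inter_add_sdiff A hB, ← measure_inter_add_sdiff B hA, inter_comm B A]
  exact add_le_add le_rfl (measure_le_of_setLIntegral_le_of_lt_of_le hw hAB ht hA_lt hB_le)

end Bathtub

theorem volume_eq_setLIntegral_sin {S : Set ℝ} (hS : MeasurableSet S) (hsub : S ⊆ Icc (-1) 1) :
    volume S = ∫⁻ z in Icc 0 π ∩ (fun z => -cos z) ⁻¹' S, ENNReal.ofReal (sin z) := by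
  have hA : MeasurableSet (Icc 0 π ∩ (fun z => -cos z) ⁻¹' S) :=
    measurableSet_Icc.inter ((by fun_prop : Measurable fun z => -cos z) hS)
  have himage : (fun z => -cos z) '' (Icc 0 π ∩ (fun z => -cos z) ⁻¹' S) = S := by
    refine (image_inter_preimage _ _ _).trans (inter_eq_right.2 fun y hy => ?_)
    obtain ⟨z, hz, hzy⟩ := surjOn_cos (show -y ∈ Icc (-1) 1 from
      ⟨by linarith [(hsub hy).2], by linarith [(hsub hy).1]⟩)
    exact ⟨z, hz, by simp [hzy]⟩
  have hderiv (z : ℝ) : HasDerivAt (fun z => -cos z) (sin z) z := by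
    simpa using (hasDerivAt_cos z).fun_neg
  have hinj : InjOn (fun z => -cos z) (Icc 0 π) := neg_injective.comp_injOn injOn_cos
  conv_lhs => rw [← himage, ← setLIntegral_one]
  rw [lintegral_image_eq_lintegral_abs_deriv_mul hA (fun z _ => (hderiv z).hasDerivWithinAt)
    (hinj.mono inter_subset_left)]
  refine setLIntegral_congr_fun hA fun z hz => ?_
  simp [abs_of_nonneg (sin_nonneg_of_nonneg_of_le_pi hz.1.1 hz.1.2)]

def tails (l : ℝ) : Set ℝ := Icc (-1) (-l) ∪ Icc l 1

theorem measurableSet_tails (l : ℝ) : MeasurableSet (tails l) :=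
  measurableSet_Icc.union measurableSet_Icc

theorem tails_subset_Icc {l : ℝ} (hl : 0 ≤ l) : tails l ⊆ Icc (-1) 1 :=
  union_subset (Icc_subset_Icc le_rfl (by linarith)) (Icc_subset_Icc (by linarith) le_rfl)

theorem volume_tails {l : ℝ} (hl0 : 0 ≤ l) (hl1 : l ≤ 1) :
    volume (tails l) = ENNReal.ofReal (2 * (1 - l)) := by
  have hinter : volume (Icc (-1) (-l) ∩ Icc l 1) = 0 := by
    rw [Icc_inter_Icc, Real.volume_Icc, ENNReal.ofReal_eq_zero]
    linarith [min_le_left (-l) 1, le_max_right (-1) l]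
  have h := measure_union_add_inter (μ := volume) (Icc (-1) (-l))
    (measurableSet_Icc (a := l) (b := 1))
  rw [hinter, add_zero, Real.volume_Icc, Real.volume_Icc,
    ← ENNReal.ofReal_add (by linarith) (by linarith)] at h
  rw [tails, h]
  ring_nf

theorem toReal_volume_le_two {S : Set ℝ} (hsub : S ⊆ Icc (-1) 1) : (volume S).toReal ≤ 2 := by
  simpa [Real.volume_Icc, one_add_one_eq_two] using
    ENNReal.toReal_mono measure_Icc_lt_top.ne (measure_mono (μ := volume) hsub)

theorem volume_tails_one_sub_half {S : Set ℝ} (hsub : S ⊆ Icc (-1) 1) :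
    volume (tails (1 - (volume S).toReal / 2)) = volume S := by
  have h2 := toReal_volume_le_two hsub
  rw [volume_tails (by linarith) (by linarith [(volume S).toReal_nonneg]),
    show 2 * (1 - (1 - (volume S).toReal / 2)) = (volume S).toReal by ring,
    ENNReal.ofReal_toReal (measure_mono hsub |>.trans_lt measure_Icc_lt_top).ne]

theorem neg_cos_mem_tails_iff {z l : ℝ} (hz : z ∈ Icc 0 π) (hl0 : 0 ≤ l) (hl1 : l ≤ 1) :
    -cos z ∈ tails l ↔ sin z ≤ √(1 - l ^ 2) := by
  have := neg_one_le_cos z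
  have := cos_le_one z
  rw [sin_eq_sqrt_one_sub_cos_sq hz.1 hz.2, sqrt_le_sqrt_iff (by nlinarith),
    sub_le_sub_iff_left, sq_le_sq, abs_of_nonneg hl0, le_abs]
  simp only [tails, mem_union, mem_Icc]
  constructor
  · rintro (⟨-, h⟩ | ⟨h, -⟩)
    exacts [Or.inl (by linarith), Or.inr h]
  · rintro (h | h)
    exacts [Or.inl ⟨by linarith, by linarith⟩, Or.inr ⟨h, by linarith⟩]

theorem stmt_9 (S : Set ℝ) (hS : MeasurableSet S) (hsub : S ⊆ Icc (-1) 1) :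
    volume (Icc 0 π ∩ (fun z => -Real.cos z) ⁻¹' S) ≤
      volume (Icc 0 π ∩ (fun z => -Real.cos z) ⁻¹'
        (Icc (-1) (-(1 - (volume S).toReal / 2)) ∪ Icc (1 - (volume S).toReal / 2) 1)) := by
  have hST := volume_tails_one_sub_half hsub
  have hl0 : 0 ≤ 1 - (volume S).toReal / 2 := by linarith [toReal_volume_le_two hsub]
  have hl1 : 1 - (volume S).toReal / 2 ≤ 1 := by linarith [(volume S).toReal_nonneg]
  set l := 1 - (volume S).toReal / 2
  change volume (Icc 0 π ∩ (fun z => -cos z) ⁻¹' S) ≤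
    volume (Icc 0 π ∩ (fun z => -cos z) ⁻¹' tails l)
  have hφ : Measurable fun z => -cos z := by fun_prop
  refine measure_le_of_setLIntegral_le (t := ENNReal.ofReal √(1 - l ^ 2))
    (by fun_prop : Measurable fun z => ENNReal.ofReal (sin z))
    (measurableSet_Icc.inter (hφ hS)) (measurableSet_Icc.inter (hφ (measurableSet_tails l)))
    ?_ ?_ ENNReal.ofReal_ne_top ?_ ?_
  · rw [← volume_eq_setLIntegral_sin hS hsub,
      ← volume_eq_setLIntegral_sin (measurableSet_tails l) (tails_subset_Icc hl0), hST]
  · refine ne_top_of_le_ne_top ?_ (lintegral_mono_set inter_subset_left)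
    rw [← volume_eq_setLIntegral_sin hS hsub]
    exact (measure_mono hsub |>.trans_lt measure_Icc_lt_top).ne
  · rintro z ⟨⟨hz, -⟩, hzT⟩
    have hlt : √(1 - l ^ 2) < sin z :=
      lt_of_not_ge fun h => hzT ⟨hz, (neg_cos_mem_tails_iff hz hl0 hl1).2 h⟩
    exact (ENNReal.ofReal_lt_ofReal_iff ((sqrt_nonneg _).trans_lt hlt)).2 hlt
  · rintro z ⟨⟨hz, hzT⟩, -⟩
    exact ENNReal.ofReal_le_ofReal ((neg_cos_mem_tails_iff hz hl0 hl1).1 hzT)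
end

section
/- Let φ(z) = −cos z on [0, π]. For any measurable set S ⊆ [−1, 1], the Lebesgue measure of the preimage satisfies |φ⁻¹(S)| ≤ (π/√2)·|S|^{1/2}. -/
/-!
Since `φ' = sin ≥ 0` on `[0, π]`, the change of variables formula gives
`∫_E sin = |φ(E)| ≤ |S|` for `E = [0, π] ∩ φ⁻¹(S)`. By the bathtub principle, among subsets of
`[0, π]` of measure `m = |E|` the integral of `sin` is smallest on the sublevel set
`[0, m/2] ∪ (π - m/2, π]`, where it equals `2 (1 - cos (m/2))`. Concavity of `sin` on `[0, π/4]`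
bounds this below by `2 m² / π²`, which is the claim.
-/

open Real MeasureTheory Set
open scoped ENNReal

theorem MeasureTheory.setLIntegral_le_setLIntegral_of_measure_eq {α : Type*}
    [MeasurableSpace α] {μ : Measure α} {f : α → ℝ≥0∞} {s t : Set α} (c : ℝ≥0∞)
    (hs : MeasurableSet s) (ht : MeasurableSet t) (hst : μ s = μ t) (hμs : μ s ≠ ∞)
    (hf_le : ∀ x ∈ t \ s, f x ≤ c) (hf_ge : ∀ x ∈ s \ t, c ≤ f x) :
    ∫⁻ x in t, f x ∂μ ≤ ∫⁻ x in s, f x ∂μ := by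
  have hsdiff : μ (s \ t) = μ (t \ s) := measure_sdiff_symm hs.nullMeasurableSet
    ht.nullMeasurableSet hst (measure_ne_top_of_subset inter_subset_left hμs)
  calc ∫⁻ x in t, f x ∂μ = ∫⁻ x in t ∩ s, f x ∂μ + ∫⁻ x in t \ s, f x ∂μ :=
        (lintegral_inter_add_sdiff f t hs).symm
    _ ≤ ∫⁻ x in s ∩ t, f x ∂μ + ∫⁻ _ in s \ t, c ∂μ := by
        rw [inter_comm, setLIntegral_const, hsdiff, ← setLIntegral_const]
        gcongr 1
        exact setLIntegral_mono' (ht.diff hs) hf_le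
    _ ≤ ∫⁻ x in s ∩ t, f x ∂μ + ∫⁻ x in s \ t, f x ∂μ := by
        gcongr 1
        exact setLIntegral_mono' (hs.diff ht) hf_ge
    _ = ∫⁻ x in s, f x ∂μ := lintegral_inter_add_sdiff f s ht

theorem Real.setLIntegral_sin_eq_volume_image_neg_cos {s : Set ℝ} (hs : MeasurableSet s)
    (hs_sub : s ⊆ Icc 0 π) :
    ∫⁻ x in s, ENNReal.ofReal (sin x) = volume ((fun x => -cos x) '' s) := by
  have hderiv : ∀ x ∈ s, HasDerivWithinAt (fun x => -cos x) (sin x) s x := fun x _ => by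
    simpa using (hasDerivAt_cos x).fun_neg.hasDerivWithinAt
  have hinj : InjOn (fun x => -cos x) s := fun x hx y hy hxy =>
    injOn_cos (hs_sub hx) (hs_sub hy) (neg_injective hxy)
  rw [← setLIntegral_one, lintegral_image_eq_lintegral_abs_deriv_mul hs hderiv hinj]
  refine setLIntegral_congr_fun hs fun x hx => ?_
  rw [mul_one, abs_of_nonneg (sin_nonneg_of_nonneg_of_le_pi (hs_sub hx).1 (hs_sub hx).2)]

theorem Real.setLIntegral_sin_Ioc {a b : ℝ} (ha : 0 ≤ a) (hab : a ≤ b) (hb : b ≤ π) :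
    ∫⁻ x in Ioc a b, ENNReal.ofReal (sin x) = ENNReal.ofReal (cos a - cos b) := by
  rw [← ofReal_integral_eq_lintegral_ofReal continuous_sin.integrableOn_Ioc
    (ae_restrict_of_forall_mem measurableSet_Ioc fun x hx =>
      sin_nonneg_of_nonneg_of_le_pi (ha.trans hx.1.le) (hx.2.trans hb)),
    ← intervalIntegral.integral_of_le hab, integral_sin]

theorem Real.sin_le_sin_of_le_or_pi_sub_le {x t : ℝ} (hx : x ∈ Icc 0 π) (ht : t ≤ π / 2)
    (hxt : x ≤ t ∨ π - t ≤ x) : sin x ≤ sin t := by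
  rcases hxt with hxt | hxt
  · exact sin_le_sin_of_le_of_le_pi_div_two (by linarith [pi_pos, hx.1]) ht hxt
  · rw [← sin_pi_sub x]
    exact sin_le_sin_of_le_of_le_pi_div_two (by linarith [hx.2, pi_pos]) ht (by linarith)

theorem Real.sin_le_sin_of_mem_Icc {x t : ℝ} (ht : 0 ≤ t) (hx : x ∈ Icc t (π - t)) :
    sin t ≤ sin x := by
  have hmem : ∀ y ∈ Icc t (π - t), y ∈ Icc 0 π := fun y hy =>
    ⟨ht.trans hy.1, by linarith [hy.2]⟩
  have hIcc : t ≤ π - t := hx.1.trans hx.2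
  simpa [sin_pi_sub] using strictConcaveOn_sin_Icc.concaveOn.min_le_of_mem_Icc
    (hmem t ⟨le_rfl, hIcc⟩) (hmem _ ⟨hIcc, le_rfl⟩) hx

theorem Real.mul_sq_le_one_sub_cos {x : ℝ} (hx₀ : 0 ≤ x) (hx : x ≤ π / 2) :
    4 / π ^ 2 * x ^ 2 ≤ 1 - cos x := by
  have hπ := pi_pos
  set a := 2 * x / π with ha
  have hsin : a * (√2 / 2) ≤ sin (x / 2) := by
    have := strictConcaveOn_sin_Icc.concaveOn.2 (⟨le_rfl, hπ.le⟩ : (0:ℝ) ∈ Icc 0 π)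
      (⟨by positivity, by linarith⟩ : π / 4 ∈ Icc 0 π)
      (sub_nonneg.2 <| (div_le_one hπ).2 (by linarith)) (by positivity) (sub_add_cancel 1 a)
    simp only [smul_eq_mul, sin_zero, sin_pi_div_four, mul_zero, zero_add] at this
    rwa [show a * (π / 4) = x / 2 by rw [ha]; field_simp; ring] at this
  have hsq := pow_le_pow_left₀ (by positivity) hsin 2
  rw [sin_sq_eq_half_sub, show 2 * (x / 2) = x by ring, mul_pow, div_pow √2, sq_sqrt zero_le_two,
    ha] at hsq
  field_simp at hsq ⊢
  linarith

theorem Real.ofReal_two_mul_one_sub_cos_le_setLIntegral_sin {s : Set ℝ} (hs : MeasurableSet s)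
    (hs_sub : s ⊆ Icc 0 π) :
    ENNReal.ofReal (2 * (1 - cos ((volume s).toReal / 2))) ≤
      ∫⁻ x in s, ENNReal.ofReal (sin x) := by
  have hπ := pi_pos
  have hs_le : volume s ≤ ENNReal.ofReal π := by
    simpa using measure_mono (μ := volume) hs_sub
  have hs_fin : volume s ≠ ∞ := ne_top_of_le_ne_top ENNReal.ofReal_ne_top hs_le
  set t := (volume s).toReal / 2 with ht_def
  have ht₀ : 0 ≤ t := by positivity
  have ht : t ≤ π / 2 := by
    linarith [ht_def, ENNReal.toReal_le_of_le_ofReal hπ.le hs_le]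
  have hdisj : Disjoint (Icc 0 t) (Ioc (π - t) π) :=
    disjoint_left.2 fun x hx hx' => by linarith [hx.2, hx'.1]
  set s₀ := Icc 0 t ∪ Ioc (π - t) π
  have hs₀ : volume s₀ = volume s := by
    rw [measure_union hdisj measurableSet_Ioc, Real.volume_Icc, Real.volume_Ioc,
      ← ENNReal.ofReal_add (by linarith) (by linarith), ← ENNReal.ofReal_toReal hs_fin]
    congr 1
    ring
  have hint : ∫⁻ x in s₀, ENNReal.ofReal (sin x) = ENNReal.ofReal (2 * (1 - cos t)) := by
    rw [lintegral_union measurableSet_Ioc hdisj, ← setLIntegral_congr Ioc_ae_eq_Icc,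
      setLIntegral_sin_Ioc le_rfl ht₀ (by linarith),
      setLIntegral_sin_Ioc (by linarith) (by linarith) le_rfl, cos_zero, cos_pi_sub, cos_pi,
      ← ENNReal.ofReal_add (by linarith [cos_le_one t]) (by linarith [cos_le_one t])]
    ring_nf
  rw [← hint]
  refine setLIntegral_le_setLIntegral_of_measure_eq (ENNReal.ofReal (sin t)) hs
    (measurableSet_Icc.union measurableSet_Ioc) hs₀.symm hs_fin ?_ ?_
  · rintro x ⟨hx₀ | hx₀, -⟩
    · exact ENNReal.ofReal_le_ofReal <| sin_le_sin_of_le_or_pi_sub_le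
        ⟨hx₀.1, by linarith [hx₀.2]⟩ ht (.inl hx₀.2)
    · exact ENNReal.ofReal_le_ofReal <| sin_le_sin_of_le_or_pi_sub_le
        ⟨by linarith [hx₀.1], hx₀.2⟩ ht (.inr hx₀.1.le)
  · rintro x ⟨hx, hx₀⟩
    simp only [s₀, mem_union, mem_Icc, mem_Ioc, not_or, not_and, not_le] at hx₀
    exact ENNReal.ofReal_le_ofReal <| sin_le_sin_of_mem_Icc ht₀
      ⟨(hx₀.1 (hs_sub hx).1).le, by by_contra! h; linarith [hx₀.2 h, (hs_sub hx).2]⟩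

theorem stmt_10 (S : Set ℝ) (hS : MeasurableSet S) (hsub : S ⊆ Icc (-1) 1) :
    volume (Icc 0 π ∩ (fun z => -Real.cos z) ⁻¹' S) ≤
      ENNReal.ofReal (π / Real.sqrt 2 * Real.sqrt (volume S).toReal) := by
  set E := Icc 0 π ∩ (fun z => -cos z) ⁻¹' S
  have hE : MeasurableSet E := measurableSet_Icc.inter (hS.preimage (by fun_prop))
  have hE_fin : volume E ≠ ∞ := measure_ne_top_of_subset inter_subset_left (by simp)
  have hS_fin : volume S ≠ ∞ := measure_ne_top_of_subset hsub (by simp)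
  set m := (volume E).toReal
  have hm : m ≤ π := ENNReal.toReal_le_of_le_ofReal pi_pos.le <| by
    simpa using measure_mono (μ := volume) (inter_subset_left : E ⊆ Icc 0 π)
  have hcos : 2 * (1 - cos (m / 2)) ≤ (volume S).toReal := by
    refine (ENNReal.ofReal_le_iff_le_toReal hS_fin).1 ?_
    calc ENNReal.ofReal (2 * (1 - cos (m / 2)))
        ≤ ∫⁻ x in E, ENNReal.ofReal (sin x) :=
          ofReal_two_mul_one_sub_cos_le_setLIntegral_sin hE inter_subset_left
      _ = volume ((fun z => -cos z) '' E) :=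
          setLIntegral_sin_eq_volume_image_neg_cos hE inter_subset_left
      _ ≤ volume S := measure_mono (image_subset_iff.2 inter_subset_right)
  have hm_sq : m ^ 2 ≤ π ^ 2 / 2 * (volume S).toReal := by
    have := mul_sq_le_one_sub_cos (x := m / 2) (by positivity) (by linarith)
    rw [div_mul_eq_mul_div, div_le_iff₀ (by positivity)] at this
    nlinarith [pi_pos]
  calc volume E = ENNReal.ofReal m := (ENNReal.ofReal_toReal hE_fin).symm
    _ ≤ ENNReal.ofReal (√(π ^ 2 / 2 * (volume S).toReal)) :=
        ENNReal.ofReal_le_ofReal (le_sqrt_of_sq_le hm_sq)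
    _ = ENNReal.ofReal (π / √2 * √(volume S).toReal) := by
        rw [sqrt_mul (by positivity), sqrt_div (sq_nonneg π), sqrt_sq pi_pos.le]
end

section
/- Suppose a ≤ b are reals with b − a ≤ 2β for some β ≥ 0, and [a, b] ⊆ [−1, 1]. Let φ(z) = −cos z on [0, π]. Then |φ⁻¹([a, b])| ≤ (π/√2)·(2β)^{1/2} = π√β. -/
/-!
On `[0, π]` the map `z ↦ -cos z` is increasing, so the preimage of `[a, b]` is the interval
`[arccos (-a), arccos (-b)]`. For `0 ≤ u ≤ v ≤ π` the product formula
`cos u - cos v = 2 sin ((u + v) / 2) sin ((v - u) / 2) ≥ 2 sin ((v - u) / 2) ^ 2 = 1 - cos (v - u)`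
together with the Jordan-type bound `1 - cos x ≥ 2 x ^ 2 / π ^ 2` gives
`(v - u) ^ 2 ≤ π ^ 2 / 2 · (b - a) ≤ π ^ 2 β`.
-/

open Real MeasureTheory Set

namespace Real

theorem Icc_inter_preimage_neg_cos {a b : ℝ} (ha : a ∈ Icc (-1) 1) (hb : b ∈ Icc (-1) 1) :
    Icc 0 π ∩ (fun z => -cos z) ⁻¹' Icc a b = Icc (arccos (-a)) (arccos (-b)) := by
  ext z
  simp only [mem_inter_iff, mem_preimage, mem_Icc]
  constructor
  · rintro ⟨⟨hz0, hzπ⟩, haz, hzb⟩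
    rw [← arccos_cos hz0 hzπ]
    exact ⟨arccos_le_arccos (by linarith), arccos_le_arccos (by linarith)⟩
  · rintro ⟨haz, hzb⟩
    have hz0 : 0 ≤ z := (arccos_nonneg _).trans haz
    have hzπ : z ≤ π := hzb.trans (arccos_le_pi _)
    have hcos_a := cos_le_cos_of_nonneg_of_le_pi (arccos_nonneg _) hzπ haz
    have hcos_b := cos_le_cos_of_nonneg_of_le_pi hz0 (arccos_le_pi _) hzb
    rw [cos_arccos (by linarith [ha.2]) (by linarith [ha.1])] at hcos_a
    rw [cos_arccos (by linarith [hb.2]) (by linarith [hb.1])] at hcos_b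
    exact ⟨⟨hz0, hzπ⟩, by linarith, by linarith⟩

theorem one_sub_cos_sub_le_cos_sub_cos {u v : ℝ} (hu : 0 ≤ u) (huv : u ≤ v) (hv : v ≤ π) :
    1 - cos (v - u) ≤ cos u - cos v := by
  -- `sin ((u + v) / 2) - sin ((v - u) / 2) = 2 sin (u / 2) cos (v / 2) ≥ 0`
  have hsin : sin ((v - u) / 2) ≤ sin ((u + v) / 2) := by
    have h := sin_sub_sin ((u + v) / 2) ((v - u) / 2)
    have hs : 0 ≤ sin (((u + v) / 2 - (v - u) / 2) / 2) :=
      sin_nonneg_of_nonneg_of_le_pi (by linarith) (by linarith)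
    have hc : 0 ≤ cos (((u + v) / 2 + (v - u) / 2) / 2) :=
      cos_nonneg_of_mem_Icc ⟨by linarith, by linarith⟩
    nlinarith [mul_nonneg hs hc]
  have hw : 0 ≤ sin ((v - u) / 2) := sin_nonneg_of_nonneg_of_le_pi (by linarith) (by linarith)
  calc 1 - cos (v - u) = 2 * sin ((v - u) / 2) * sin ((v - u) / 2) := by
        rw [mul_assoc, ← sq, sin_sq_eq_half_sub, mul_div_cancel₀ _ two_ne_zero]
        ring
    _ ≤ 2 * sin ((u + v) / 2) * sin ((v - u) / 2) := by gcongr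
    _ = cos u - cos v := by
        rw [cos_sub_cos, show (u - v) / 2 = -((v - u) / 2) by ring, sin_neg]
        ring

theorem mul_sq_sub_le_cos_sub_cos {u v : ℝ} (hu : 0 ≤ u) (huv : u ≤ v) (hv : v ≤ π) :
    2 / π ^ 2 * (v - u) ^ 2 ≤ cos u - cos v := by
  have h := cos_le_one_sub_mul_cos_sq (x := v - u) (by rw [abs_le]; constructor <;> linarith)
  linarith [one_sub_cos_sub_le_cos_sub_cos hu huv hv]

end Real

theorem stmt_14 (a b β : ℝ) (hab : a ≤ b) (hβ : 0 ≤ β) (hlen : b - a ≤ 2 * β)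
    (hsub : Icc a b ⊆ Icc (-1) 1) :
    volume (Icc 0 π ∩ (fun z => -Real.cos z) ⁻¹' Icc a b) ≤
      ENNReal.ofReal (π * Real.sqrt β) := by
  have ha : a ∈ Icc (-1 : ℝ) 1 := hsub ⟨le_rfl, hab⟩
  have hb : b ∈ Icc (-1 : ℝ) 1 := hsub ⟨hab, le_rfl⟩
  rw [Real.Icc_inter_preimage_neg_cos ha hb, Real.volume_Icc]
  refine ENNReal.ofReal_le_ofReal ?_
  set u := arccos (-a)
  set v := arccos (-b)
  have huv : u ≤ v := arccos_le_arccos (by linarith)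
  have hcos : 2 / π ^ 2 * (v - u) ^ 2 ≤ b - a := by
    have h := Real.mul_sq_sub_le_cos_sub_cos (arccos_nonneg (-a)) huv (arccos_le_pi (-b))
    rwa [cos_arccos (by linarith [ha.2]) (by linarith [ha.1]),
      cos_arccos (by linarith [hb.2]) (by linarith [hb.1]), neg_sub_neg] at h
  have hsq : (v - u) ^ 2 ≤ (π * √β) ^ 2 := by
    rw [mul_pow, sq_sqrt hβ]
    have := pi_pos
    rw [div_mul_eq_mul_div, div_le_iff₀ (by positivity)] at hcos
    nlinarith
  exact (pow_le_pow_iff_left₀ (by linarith) (by positivity) two_ne_zero).1 hsq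
end

section
/- For z⁻, z⁺ ∈ [0, π] with z⁻ ≤ z⁺, define λ^± = −cos z^±. Then (z⁺ − z⁻)² ≤ (π²/2)·(λ⁺ − λ⁻). -/
/-!
Write `a = (z⁺ - z⁻)/2` and `b = (z⁺ + z⁻)/2`. Sum-to-product gives
`λ⁺ - λ⁻ = 2 sin b sin a`. Since `b ∈ [a, π - a]`, `sin b ≥ sin a`, and Jordan's inequality
`sin a ≥ 2a/π` on `[0, π/2]` then yields `λ⁺ - λ⁻ ≥ 2 (2a/π)² = (2/π²) (z⁺ - z⁻)²`.
-/

open Real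

lemma neg_cos_sub_neg_cos (x y : ℝ) :
    -cos y - -cos x = 2 * sin ((y + x) / 2) * sin ((y - x) / 2) := by
  have h := cos_sub_cos x y
  rw [show (x - y) / 2 = -((y - x) / 2) by ring, add_comm x y, sin_neg] at h
  linarith

lemma sin_le_sin_of_mem_Icc_pi_sub {a b : ℝ} (ha : -(π / 2) ≤ a) (hab : a ≤ b)
    (hb : b ≤ π - a) : sin a ≤ sin b := by
  rcases le_or_gt b (π / 2) with hb' | hb'
  · exact sin_le_sin_of_le_of_le_pi_div_two ha hb' hab
  · rw [← sin_pi_sub b]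
    exact sin_le_sin_of_le_of_le_pi_div_two ha (by linarith) (by linarith)

lemma sq_two_div_pi_mul_le_sin_mul_sin {a b : ℝ} (ha : 0 ≤ a) (hab : a ≤ b)
    (hb : b ≤ π - a) : (2 / π * a) ^ 2 ≤ sin b * sin a := by
  have hjordan : 2 / π * a ≤ sin a := mul_le_sin ha (by linarith)
  have hsin : sin a ≤ sin b := sin_le_sin_of_mem_Icc_pi_sub (by linarith [pi_pos]) hab hb
  have hpos : 0 ≤ 2 / π * a := by positivity
  rw [sq]
  exact mul_le_mul (hjordan.trans hsin) hjordan hpos (hpos.trans (hjordan.trans hsin))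

theorem stmt_15 (zm zp : ℝ) (h0 : zm ∈ Set.Icc 0 Real.pi) (h1 : zp ∈ Set.Icc 0 Real.pi)
    (h2 : zm ≤ zp) :
    (zp - zm) ^ 2 ≤ Real.pi ^ 2 / 2 * (-Real.cos zp - -Real.cos zm) := by
  obtain ⟨hm0, -⟩ := h0
  obtain ⟨-, hpπ⟩ := h1
  have key := sq_two_div_pi_mul_le_sin_mul_sin (a := (zp - zm) / 2) (b := (zp + zm) / 2)
    (by linarith) (by linarith) (by linarith)
  rw [neg_cos_sub_neg_cos]
  calc (zp - zm) ^ 2 = π ^ 2 / 2 * (2 * (2 / π * ((zp - zm) / 2)) ^ 2) := by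
        field_simp [pi_ne_zero]
    _ ≤ π ^ 2 / 2 * (2 * sin ((zp + zm) / 2) * sin ((zp - zm) / 2)) := by
        rw [mul_assoc 2]
        gcongr
end

section
/- Let λ⁻ ≤ λ⁺ with [λ⁻, λ⁺] ⊆ [−1, 1], let z^± = arccos(−λ^±) ∈ [0, π], and let z* = arccos(1 − (λ⁺ − λ⁻)/2) ∈ [0, π/2]. Then z⁺ − z⁻ ≤ 2z* and 4z*² ≤ (π²/2)(λ⁺ − λ⁻); consequently z⁺ − z⁻ ≤ (π/√2)(λ⁺ − λ⁻)^{1/2}. -/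
/-!
Write δ = λ⁺ − λ⁻ and u = z⁺ − z⁻. Sum-to-product gives δ = cos z⁻ − cos z⁺ ≥ 1 − cos u, while
cos (2z*) = 1 − 2δ + δ²/2 ≤ 1 − δ; as cos is antitone on [0, π], u ≤ 2z*. Next, δ/4 = sin² (z*/2)
with z*/2 ∈ [0, π/4], where sin lies above its chord: sin x ≥ (2√2/π) x; squaring gives
4z*² ≤ (π²/2) δ. The square-root bound combines the two.
-/

open Real Set

namespace Real

theorem one_sub_cos_sub_le_cos_sub_cos_s19 {a b : ℝ} (ha : 0 ≤ a) (hab : a ≤ b) (hb : b ≤ π) :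
    1 - cos (b - a) ≤ cos a - cos b := by
  have hsum : cos a + cos (b - a) = 2 * cos (b / 2) * cos (a - b / 2) := by
    rw [cos_add_cos, show (a + (b - a)) / 2 = b / 2 by ring,
      show (a - (b - a)) / 2 = a - b / 2 by ring]
  have hsq : 1 + cos b = 2 * cos (b / 2) ^ 2 := by
    rw [cos_sq, mul_div_cancel₀ b two_ne_zero]; ring
  have hhalf : 0 ≤ cos (b / 2) := cos_nonneg_of_mem_Icc ⟨by linarith [pi_pos], by linarith⟩
  have hmid : cos (b / 2) ≤ cos (a - b / 2) := by
    rw [← cos_abs (a - b / 2)]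
    exact cos_le_cos_of_nonneg_of_le_pi (abs_nonneg _) (by linarith)
      (abs_le.2 ⟨by linarith, by linarith⟩)
  nlinarith [mul_le_mul_of_nonneg_left hmid hhalf]

theorem le_two_mul_arccos_of_one_sub_cos_le {u δ : ℝ} (hu : 0 ≤ u) (huπ : u ≤ π) (hδ : δ ≤ 2)
    (h : 1 - cos u ≤ δ) : u ≤ 2 * arccos (1 - δ / 2) := by
  have hδ0 : 0 ≤ δ := by linarith [cos_le_one u]
  have hz : cos (arccos (1 - δ / 2)) = 1 - δ / 2 := cos_arccos (by linarith) (by linarith)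
  have hzπ : 2 * arccos (1 - δ / 2) ≤ π := by
    linarith [arccos_le_pi_div_two.2 (by linarith : 0 ≤ 1 - δ / 2)]
  have hcos : cos (2 * arccos (1 - δ / 2)) ≤ cos u := by
    rw [cos_two_mul, hz]; nlinarith
  exact (strictAntiOn_cos.le_iff_ge ⟨mul_nonneg zero_le_two (arccos_nonneg _), hzπ⟩
    ⟨hu, huπ⟩).1 hcos

theorem arccos_sub_arccos_le_two_mul_arccos {x y : ℝ} (hy : -1 ≤ y) (hyx : y ≤ x) (hx : x ≤ 1) :
    arccos y - arccos x ≤ 2 * arccos (1 - (x - y) / 2) := by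
  have hcos := one_sub_cos_sub_le_cos_sub_cos_s19 (arccos_nonneg x) (arccos_le_arccos hyx)
    (arccos_le_pi y)
  rw [cos_arccos (by linarith) hx, cos_arccos hy (by linarith)] at hcos
  exact le_two_mul_arccos_of_one_sub_cos_le (sub_nonneg.2 (arccos_le_arccos hyx))
    (by linarith [arccos_le_pi y, arccos_nonneg x]) (by linarith) hcos

theorem mul_sin_le_mul_sin {x c : ℝ} (hx : 0 ≤ x) (hxc : x ≤ c) (hc : c ≤ π) :
    x * sin c ≤ c * sin x := by
  rcases (hx.trans hxc).eq_or_lt with rfl | hc0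
  · obtain rfl : x = 0 := le_antisymm hxc hx
    simp
  have hconc := strictConcaveOn_sin_Icc.concaveOn.2 (⟨le_rfl, pi_pos.le⟩ : (0 : ℝ) ∈ Icc 0 π)
    ⟨hc0.le, hc⟩ (sub_nonneg.2 (div_le_one_of_le₀ hxc hc0.le)) (div_nonneg hx hc0.le) (by ring)
  simp only [smul_eq_mul, sin_zero, mul_zero, zero_add, div_mul_cancel₀ x hc0.ne'] at hconc
  rwa [div_mul_eq_mul_div, div_le_iff₀ hc0, mul_comm (sin x)] at hconc

theorem four_mul_arccos_one_sub_half_sq_le {δ : ℝ} (hδ0 : 0 ≤ δ) (hδ2 : δ ≤ 2) :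
    4 * arccos (1 - δ / 2) ^ 2 ≤ π ^ 2 / 2 * δ := by
  set z := arccos (1 - δ / 2)
  have hz : cos z = 1 - δ / 2 := cos_arccos (by linarith) (by linarith)
  have hzπ : z ≤ π / 2 := arccos_le_pi_div_two.2 (by linarith)
  have hsin : sin (z / 2) ^ 2 = δ / 4 := by
    rw [sin_sq_eq_half_sub, mul_div_cancel₀ z two_ne_zero, hz]; ring
  have hz0 : 0 ≤ z / 2 := div_nonneg (arccos_nonneg _) zero_le_two
  have hchord := mul_sin_le_mul_sin hz0 (by linarith : z / 2 ≤ π / 4) (by linarith [pi_pos])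
  rw [sin_pi_div_four] at hchord
  have hsq := pow_le_pow_left₀ (mul_nonneg hz0 (by positivity)) hchord 2
  rw [mul_pow, mul_pow, hsin, div_pow, div_pow, sq_sqrt zero_le_two] at hsq
  nlinarith [pi_pos]

end Real

theorem stmt_19 (lm lp : ℝ) (h1 : -1 ≤ lm) (h2 : lm ≤ lp) (h3 : lp ≤ 1) :
    Real.arccos (-lp) - Real.arccos (-lm) ≤ 2 * Real.arccos (1 - (lp - lm) / 2) ∧
    4 * Real.arccos (1 - (lp - lm) / 2) ^ 2 ≤ Real.pi ^ 2 / 2 * (lp - lm) ∧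
    Real.arccos (-lp) - Real.arccos (-lm) ≤ Real.pi / Real.sqrt 2 * Real.sqrt (lp - lm) := by
  have hδ : 0 ≤ lp - lm := sub_nonneg.2 h2
  have hpreimage := arccos_sub_arccos_le_two_mul_arccos (x := -lm) (y := -lp)
    (by linarith) (by linarith) (by linarith)
  rw [show -lm - -lp = lp - lm by ring] at hpreimage
  have hsquare := four_mul_arccos_one_sub_half_sq_le hδ (by linarith)
  refine ⟨hpreimage, hsquare, hpreimage.trans ?_⟩
  rw [← pow_le_pow_iff_left₀ (mul_nonneg zero_le_two (arccos_nonneg _)) (by positivity)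
    two_ne_zero, mul_pow (π / √2), div_pow, sq_sqrt zero_le_two, sq_sqrt hδ]
  linarith
end
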